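/- arXiv:1708.03281 — 3 statements merged into one kernel-verified Lean document; each statement's English description precedes it below -/
import Mathlib

section
/- Let p > 1 be a real number and let ϱ ∈ (0,1). The function f(α) = ((1 + α)^p − (1 + ϱ)) / α^p attains its maximum over the interval ((1 + ϱ)^{1/p} − 1, ∞) at the point α* = (1 + ϱ)^{1/(p−1)} − 1, and its maximum value equals f(α*) = (1 + ϱ)·((1 + ϱ)^{1/(p−1)} − 1)^{1−p}. -/
/-!
Put `s = (1 + ϱ) ^ (1 / (p - 1))`, so that `s ^ (p - 1) = 1 + ϱ`. Writing
`1 + α = s⁻¹ • s + (1 - s⁻¹) • (α s / (s - 1))`, convexity of `x ↦ x ^ p` gives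
`(1 + α) ^ p ≤ s ^ (p - 1) + α ^ p (s / (s - 1)) ^ (p - 1)`, i.e. `f α ≤ (s / (s - 1)) ^ (p - 1)`,
and both points of the convex combination coincide exactly when `α = s - 1`.
-/

namespace Real

lemma mul_rpow_div_self {p x t : ℝ} (hx : 0 ≤ x) (ht : 0 < t) :
    t * (x / t) ^ p = x ^ p / t ^ (p - 1) := by
  rw [div_rpow hx ht.le, rpow_sub_one ht.ne']
  field_simp

lemma add_rpow_le_rpow_div_add_rpow_div {p : ℝ} (hp : 1 ≤ p) {x y t : ℝ} (hx : 0 ≤ x)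
    (hy : 0 ≤ y) (ht₀ : 0 < t) (ht₁ : t < 1) :
    (x + y) ^ p ≤ x ^ p / t ^ (p - 1) + y ^ p / (1 - t) ^ (p - 1) := by
  have hu : 0 < 1 - t := sub_pos.2 ht₁
  have hsplit : t * (x / t) + (1 - t) * (y / (1 - t)) = x + y := by
    field_simp
  have := (convexOn_rpow hp).2 (Set.mem_Ici.2 (div_nonneg hx ht₀.le))
    (Set.mem_Ici.2 (div_nonneg hy hu.le)) ht₀.le hu.le (add_sub_cancel t 1)
  simpa only [smul_eq_mul, hsplit, mul_rpow_div_self hx ht₀, mul_rpow_div_self hy hu] using this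

section

variable {p s : ℝ}

lemma one_add_rpow_le (hp : 1 ≤ p) (hs : 1 < s) {α : ℝ} (hα : 0 ≤ α) :
    (1 + α) ^ p ≤ s ^ (p - 1) + α ^ p * (s / (s - 1)) ^ (p - 1) := by
  have hs₀ : 0 < s := by linarith
  have h := add_rpow_le_rpow_div_add_rpow_div hp zero_le_one hα (inv_pos.2 hs₀)
    (inv_lt_one_of_one_lt₀ hs)
  have hsub : 1 - s⁻¹ = (s / (s - 1))⁻¹ := by
    field_simp
  rwa [one_rpow, hsub, inv_rpow hs₀.le, inv_rpow (div_pos hs₀ (by linarith)).le, one_div, inv_inv,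
    div_inv_eq_mul] at h

lemma one_add_rpow_sub_div_rpow_le (hp : 1 ≤ p) (hs : 1 < s) {α : ℝ} (hα : 0 < α) :
    ((1 + α) ^ p - s ^ (p - 1)) / α ^ p ≤ (s / (s - 1)) ^ (p - 1) := by
  rw [div_le_iff₀ (rpow_pos_of_pos hα p)]
  linarith [one_add_rpow_le hp hs hα.le]

lemma rpow_sub_rpow_sub_one_div_rpow (hs : 1 < s) :
    (s ^ p - s ^ (p - 1)) / (s - 1) ^ p = (s / (s - 1)) ^ (p - 1) := by
  have hs₀ : 0 < s := by linarith
  have hs₁ : 0 < s - 1 := by linarith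
  rw [div_rpow hs₀.le hs₁.le, rpow_sub_one hs₀.ne', rpow_sub_one hs₁.ne']
  field_simp

lemma div_sub_one_rpow_sub_one (hs : 1 < s) :
    (s / (s - 1)) ^ (p - 1) = s ^ (p - 1) * (s - 1) ^ (1 - p) := by
  rw [div_rpow (by linarith) (by linarith), div_eq_mul_inv, ← rpow_neg (by linarith), neg_sub]

end

end Real

open Real in
/-- For `p > 1` and `ϱ ∈ (0,1)`, the function
`f(α) = ((1 + α)^p - (1 + ϱ)) / α^p` attains its maximum over
`((1 + ϱ)^(1/p) - 1, ∞)` at `α* = (1 + ϱ)^(1/(p-1)) - 1`, with maximum value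
`(1 + ϱ) ((1 + ϱ)^(1/(p-1)) - 1)^(1-p)`. -/
theorem stmt_2 (p ϱ : ℝ) (hp : 1 < p) (hϱ : ϱ ∈ Set.Ioo (0 : ℝ) 1) :
    (1 + ϱ) ^ (1 / (p - 1)) - 1 ∈ Set.Ioi ((1 + ϱ) ^ (1 / p) - 1) ∧
    (∀ α ∈ Set.Ioi ((1 + ϱ) ^ (1 / p) - 1),
      ((1 + α) ^ p - (1 + ϱ)) / α ^ p
        ≤ ((1 + ((1 + ϱ) ^ (1 / (p - 1)) - 1)) ^ p - (1 + ϱ))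
            / ((1 + ϱ) ^ (1 / (p - 1)) - 1) ^ p) ∧
    ((1 + ((1 + ϱ) ^ (1 / (p - 1)) - 1)) ^ p - (1 + ϱ))
        / ((1 + ϱ) ^ (1 / (p - 1)) - 1) ^ p
      = (1 + ϱ) * ((1 + ϱ) ^ (1 / (p - 1)) - 1) ^ (1 - p) := by
  have hc : 1 < 1 + ϱ := by linarith [hϱ.1]
  have hp₁ : 0 < p - 1 := by linarith
  set s := (1 + ϱ) ^ (1 / (p - 1)) with hs_def
  have hs : 1 < s := one_lt_rpow hc (by positivity)
  have hsp : s ^ (p - 1) = 1 + ϱ := by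
    rw [hs_def, one_div, rpow_inv_rpow (by linarith) hp₁.ne']
  have hlt : (1 + ϱ) ^ (1 / p) < s :=
    rpow_lt_rpow_of_exponent_lt hc (one_div_lt_one_div_of_lt hp₁ (by linarith))
  have hvalue : ((1 + (s - 1)) ^ p - (1 + ϱ)) / (s - 1) ^ p = (s / (s - 1)) ^ (p - 1) := by
    rw [add_sub_cancel, ← hsp, rpow_sub_rpow_sub_one_div_rpow hs]
  refine ⟨sub_lt_sub_right hlt 1, fun α hα => ?_, ?_⟩
  · have hα₀ : 0 < α := by
      linarith [Set.mem_Ioi.1 hα, one_le_rpow hc.le (by positivity : (0 : ℝ) ≤ 1 / p)]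
    rw [hvalue, ← hsp]
    exact one_add_rpow_sub_div_rpow_le hp.le hs hα₀
  · rw [hvalue, div_sub_one_rpow_sub_one hs, hsp]
end

section
/- Let n ≥ 1, let k be a positive integer, let θ > 0, and let J ⊆ ℝⁿ be a Borel set with ℋ^{n−1}(J) < ∞. Let B be the set of lattice points z ∈ (2/k)·ℤⁿ such that ℋ^{n−1}(J ∩ (z + (−4/k, 4/k)ⁿ)) > θ·k^{−(n−1)}. Then B is finite with at most 4ⁿ·θ^{−1}·k^{n−1}·ℋ^{n−1}(J) elements, and the Lebesgue measure of the union ⋃_{z∈B} (z + (−4/k, 4/k)ⁿ) is at most 32ⁿ·ℋ^{n−1}(J)/(k·θ). -/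
/-!
Every point of `ℝⁿ` lies in at most `4ⁿ` of the cubes `z + (-4/k, 4/k)ⁿ`, `z ∈ (2/k)ℤⁿ`,
so summing `ℋ^{n-1}(J ∩ cube)` over any family of lattice points gives at most `4ⁿ ℋ^{n-1}(J)`.
Each cube centred at a point of `B` contributes more than `θ k^{-(n-1)}`, which bounds the number
of points of `B`; each cube has volume `(8/k)ⁿ`, which turns the count into the volume bound.
-/

open MeasureTheory Filter
open scoped ENNReal

/-- The open axis-parallel cube of center `z` and sidelength `8/k` in `ℝⁿ`. -/
def bigCube (n k : ℕ) (z : EuclideanSpace ℝ (Fin n)) : Set (EuclideanSpace ℝ (Fin n)) :=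
  {x | ∀ i, x i ∈ Set.Ioo (z i - 4 / k) (z i + 4 / k)}

/-- The lattice `(2/k)·ℤⁿ` in `ℝⁿ`. -/
def latticePts (n k : ℕ) : Set (EuclideanSpace ℝ (Fin n)) :=
  {z | ∀ i, ∃ m : ℤ, z i = m * (2 / k)}

open Finset

open Classical in
theorem sum_measure_le_mul_measure_univ_of_card_filter_le {X ι : Type*} [MeasurableSpace X]
    (μ : Measure X) (S : Finset ι) {Q : ι → Set X} (hQ : ∀ i ∈ S, MeasurableSet (Q i)) (M : ℕ)
    (hM : ∀ x, #{i ∈ S | x ∈ Q i} ≤ M) :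
    ∑ i ∈ S, μ (Q i) ≤ M * μ Set.univ :=
  calc ∑ i ∈ S, μ (Q i) = ∑ i ∈ S, ∫⁻ x, (Q i).indicator 1 x ∂μ :=
        sum_congr rfl fun i hi => (lintegral_indicator_one (hQ i hi)).symm
    _ = ∫⁻ x, ∑ i ∈ S, (Q i).indicator 1 x ∂μ :=
        (lintegral_finsetSum _ fun i hi => measurable_one.indicator (hQ i hi)).symm
    _ ≤ ∫⁻ _, (M : ℝ≥0∞) ∂μ := by
        refine lintegral_mono fun x => ?_
        rw [sum_indicator_eq_sum_filter]
        simpa using hM x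
    _ = M * μ Set.univ := lintegral_const _

theorem Set.finite_and_natCard_le_of_forall_finset_card_le {α : Type*} {s : Set α} {C : ℝ≥0∞}
    (hC : C ≠ ⊤) (h : ∀ t : Finset α, ↑t ⊆ s → (#t : ℝ≥0∞) ≤ C) :
    s.Finite ∧ (Nat.card s : ℝ≥0∞) ≤ C := by
  have hfin : s.Finite := by
    by_contra hinf
    obtain ⟨N, hN⟩ := ENNReal.exists_nat_gt hC
    obtain ⟨t, hts, rfl⟩ := Set.Infinite.exists_subset_card_eq hinf N
    exact (h t hts).not_gt hN
  refine ⟨hfin, ?_⟩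
  rw [Nat.card_eq_card_finite_toFinset hfin]
  exact h _ hfin.coe_toFinset.subset

section Cubes

variable {n k : ℕ}

theorem bigCube_eq_preimage (z : EuclideanSpace ℝ (Fin n)) :
    bigCube n k z = (MeasurableEquiv.toLp 2 (Fin n → ℝ)).symm ⁻¹'
      Set.univ.pi fun i => Set.Ioo (z i - 4 / k) (z i + 4 / k) := by
  ext x; simp [bigCube, MeasurableEquiv.coe_toLp_symm, Set.mem_pi]

theorem measurableSet_bigCube (z : EuclideanSpace ℝ (Fin n)) :
    MeasurableSet (bigCube n k z) := by
  rw [bigCube_eq_preimage]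
  exact MeasurableEquiv.measurableSet_preimage _ |>.2 (.univ_pi fun _ => measurableSet_Ioo)

theorem volume_bigCube (hk : k ≠ 0) (z : EuclideanSpace ℝ (Fin n)) :
    volume (bigCube n k z) = (8 / k : ℝ≥0∞) ^ n := by
  have hside : ∀ i, volume (Set.Ioo (z i - 4 / k) (z i + 4 / k)) = (8 / k : ℝ≥0∞) := by
    intro i
    rw [Real.volume_Ioo, show z i + 4 / k - (z i - 4 / k) = 8 / k by ring,
      ENNReal.ofReal_div_of_pos (by positivity)]
    simp
  rw [bigCube_eq_preimage,
    (EuclideanSpace.volume_preserving_symm_measurableEquiv_toLp (Fin n)).measure_preimage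
      (MeasurableSet.univ_pi fun i => measurableSet_Ioo).nullMeasurableSet, volume_pi_pi]
  simp [hside]

noncomputable def latticeIndex (k : ℕ) (z : EuclideanSpace ℝ (Fin n)) : Fin n → ℤ :=
  fun i => ⌊(k : ℝ) * z i / 2⌋

theorem latticeIndex_mul (hk : k ≠ 0) {z : EuclideanSpace ℝ (Fin n)} (hz : z ∈ latticePts n k)
    (i : Fin n) : (latticeIndex k z i : ℝ) = k * z i / 2 := by
  obtain ⟨m, hm⟩ := hz i
  have : (k : ℝ) * z i / 2 = m := by rw [hm]; field_simp
  rw [latticeIndex, this, Int.floor_intCast]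

theorem injOn_latticeIndex (hk : k ≠ 0) : Set.InjOn (latticeIndex (n := n) k) (latticePts n k) := by
  intro z hz z' hz' h
  ext i
  have := congrArg (fun m : Fin n → ℤ => (m i : ℝ)) h
  simp only [latticeIndex_mul hk hz, latticeIndex_mul hk hz'] at this
  field_simp at this
  exact this

theorem latticeIndex_mem_Icc_of_mem_bigCube (hk : k ≠ 0) {x z : EuclideanSpace ℝ (Fin n)}
    (hz : z ∈ latticePts n k) (hx : x ∈ bigCube n k z) (i : Fin n) :
    latticeIndex k z i ∈ Icc (latticeIndex k x i - 1) (latticeIndex k x i + 2) := by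
  have hkR : (0 : ℝ) < k := by positivity
  have hzi := latticeIndex_mul hk hz i
  obtain ⟨hlo, hhi⟩ := hx i
  -- in the rescaled coordinate `k xᵢ / 2`, the cube is the interval of radius `2` around the index
  have hlo' : (latticeIndex k z i - 2 : ℤ) ≤ (k : ℝ) * x i / 2 := by
    push_cast; rw [hzi]
    have := (mul_lt_mul_iff_of_pos_left hkR).2 hlo
    field_simp at this ⊢; linarith
  have hhi' : (k : ℝ) * x i / 2 < (latticeIndex k z i + 2 : ℤ) := by
    push_cast; rw [hzi]
    have := (mul_lt_mul_iff_of_pos_left hkR).2 hhi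
    field_simp at this ⊢; linarith
  have h1 := Int.le_floor.2 hlo'
  have h2 := Int.floor_lt.2 hhi'
  simp only [latticeIndex] at h1 h2 ⊢
  rw [mem_Icc]
  omega

open Classical in
theorem card_filter_mem_bigCube_le (hk : k ≠ 0) (S : Finset (EuclideanSpace ℝ (Fin n)))
    (hS : ↑S ⊆ latticePts n k) (x : EuclideanSpace ℝ (Fin n)) :
    #{z ∈ S | x ∈ bigCube n k z} ≤ 4 ^ n := by
  let box : Finset (Fin n → ℤ) :=
    Fintype.piFinset fun i => Icc (latticeIndex k x i - 1) (latticeIndex k x i + 2)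
  have hbox : #box = 4 ^ n := by
    have hside : ∀ i, #(Icc (latticeIndex k x i - 1) (latticeIndex k x i + 2)) = 4 := fun i => by
      rw [Int.card_Icc]; omega
    simp only [box, Fintype.card_piFinset, hside, prod_const, card_univ, Fintype.card_fin]
  rw [← hbox]
  refine card_le_card_of_injOn (latticeIndex k) (fun z hz => ?_)
    ((injOn_latticeIndex hk).mono fun z hz => hS (mem_filter.1 hz).1)
  obtain ⟨hzS, hxz⟩ := mem_filter.1 hz
  exact Fintype.mem_piFinset.2 (latticeIndex_mem_Icc_of_mem_bigCube hk (hS hzS) hxz)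

theorem sum_measure_inter_bigCube_le (hk : k ≠ 0) (μ : Measure (EuclideanSpace ℝ (Fin n)))
    (J : Set (EuclideanSpace ℝ (Fin n))) (S : Finset (EuclideanSpace ℝ (Fin n)))
    (hS : ↑S ⊆ latticePts n k) :
    ∑ z ∈ S, μ (J ∩ bigCube n k z) ≤ 4 ^ n * μ J := by
  have := sum_measure_le_mul_measure_univ_of_card_filter_le (μ.restrict J) S
    (Q := bigCube n k) (fun z _ => measurableSet_bigCube z) _ (card_filter_mem_bigCube_le hk S hS)
  simpa [Measure.restrict_apply (measurableSet_bigCube _), Set.inter_comm] using this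

theorem card_mul_le_of_lt_measure_inter_bigCube (hk : k ≠ 0)
    (μ : Measure (EuclideanSpace ℝ (Fin n))) (J : Set (EuclideanSpace ℝ (Fin n))) (d : ℝ≥0∞)
    (S : Finset (EuclideanSpace ℝ (Fin n))) (hS : ↑S ⊆ latticePts n k)
    (hd : ∀ z ∈ S, d < μ (J ∩ bigCube n k z)) :
    #S * d ≤ 4 ^ n * μ J := by
  rw [← nsmul_eq_mul]
  exact (card_nsmul_le_sum S _ d fun z hz => (hd z hz).le).trans
    (sum_measure_inter_bigCube_le hk μ J S hS)

theorem volume_biUnion_bigCube_le (hk : k ≠ 0) {B : Set (EuclideanSpace ℝ (Fin n))}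
    (hB : B.Finite) :
    volume (⋃ z ∈ B, bigCube n k z) ≤ Nat.card B * (8 / k : ℝ≥0∞) ^ n :=
  calc volume (⋃ z ∈ B, bigCube n k z) = volume (⋃ z ∈ hB.toFinset, bigCube n k z) := by simp
    _ ≤ ∑ z ∈ hB.toFinset, volume (bigCube n k z) := measure_biUnion_finset_le _ _
    _ = Nat.card B * (8 / k : ℝ≥0∞) ^ n := by
        simp [volume_bigCube hk, Nat.card_eq_card_finite_toFinset hB]

end Cubes

theorem ENNReal.four_pow_mul_inv_mul_pow_pred_mul_eight_div_pow {a b c : ℝ≥0∞} {n : ℕ}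
    (hn : n ≠ 0) (hb : b ≠ 0) (hb' : b ≠ ⊤) :
    4 ^ n * c⁻¹ * b ^ (n - 1) * a * (8 / b) ^ n = 32 ^ n * a / (b * c) := by
  have hbn : b ^ (n - 1) ≠ 0 := pow_ne_zero _ hb
  have hbn' : b ^ (n - 1) ≠ ⊤ := by finiteness
  rw [div_eq_mul_inv 8 b, mul_pow, ← ENNReal.inv_pow, ← pow_sub_one_mul hn b,
    ENNReal.mul_inv (.inl hbn) (.inl hbn'), div_eq_mul_inv, ENNReal.mul_inv (.inl hb) (.inl hb'),
    show (32 : ℝ≥0∞) ^ n = 4 ^ n * 8 ^ n by rw [← mul_pow]; norm_num]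
  calc _ = 4 ^ n * 8 ^ n * a * c⁻¹ * b⁻¹ * (b ^ (n - 1) * (b ^ (n - 1))⁻¹) := by ring
    _ = _ := by rw [ENNReal.mul_inv_cancel hbn hbn']; ring

theorem stmt_6_general (n : ℕ) (hn : 1 ≤ n) (k : ℕ) (hk : 0 < k) (θ : ℝ) (hθ : 0 < θ)
    (J : Set (EuclideanSpace ℝ (Fin n)))
    (hJfin : μH[(n : ℝ) - 1] J < ⊤)
    (B : Set (EuclideanSpace ℝ (Fin n)))
    (hB : B = {z ∈ latticePts n k |
      ENNReal.ofReal θ / (k : ℝ≥0∞) ^ (n - 1) < μH[(n : ℝ) - 1] (J ∩ bigCube n k z)}) :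
    B.Finite ∧
      (Nat.card B : ℝ≥0∞)
        ≤ 4 ^ n * (ENNReal.ofReal θ)⁻¹ * (k : ℝ≥0∞) ^ (n - 1) * μH[(n : ℝ) - 1] J ∧
      volume (⋃ z ∈ B, bigCube n k z)
        ≤ 32 ^ n * μH[(n : ℝ) - 1] J / ((k : ℝ≥0∞) * ENNReal.ofReal θ) := by
  set μJ := μH[(n : ℝ) - 1] J
  set t := ENNReal.ofReal θ
  have ht0 : t ≠ 0 := ENNReal.ofReal_ne_zero_iff.2 hθ
  have hkpow0 : (k : ℝ≥0∞) ^ (n - 1) ≠ 0 := pow_ne_zero _ (by exact_mod_cast hk.ne')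
  have hkpow : (k : ℝ≥0∞) ^ (n - 1) ≠ ⊤ := by finiteness
  have hcount : ∀ S : Finset (EuclideanSpace ℝ (Fin n)), ↑S ⊆ B →
      (#S : ℝ≥0∞) ≤ 4 ^ n * t⁻¹ * (k : ℝ≥0∞) ^ (n - 1) * μJ := by
    intro S hSB
    rw [hB] at hSB
    have := card_mul_le_of_lt_measure_inter_bigCube hk.ne' _ J _ S
      (fun z hz => (hSB hz).1) (fun z hz => (hSB hz).2)
    calc (#S : ℝ≥0∞) ≤ 4 ^ n * μJ / (t / (k : ℝ≥0∞) ^ (n - 1)) :=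
          (ENNReal.le_div_iff_mul_le (.inl (ENNReal.div_ne_zero.2 ⟨ht0, hkpow⟩))
            (.inl (ENNReal.div_ne_top ENNReal.ofReal_ne_top hkpow0))).2 this
      _ = 4 ^ n * t⁻¹ * (k : ℝ≥0∞) ^ (n - 1) * μJ := by
          rw [div_eq_mul_inv, ENNReal.inv_div (.inl hkpow) (.inl hkpow0), div_eq_mul_inv]; ring
  obtain ⟨hfin, hcard⟩ := Set.finite_and_natCard_le_of_forall_finset_card_le
    (by have := ENNReal.inv_ne_top.2 ht0; have := hJfin.ne; finiteness) hcount
  refine ⟨hfin, hcard, ?_⟩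
  calc volume (⋃ z ∈ B, bigCube n k z) ≤ Nat.card B * (8 / k : ℝ≥0∞) ^ n :=
        volume_biUnion_bigCube_le hk.ne' hfin
    _ ≤ 4 ^ n * t⁻¹ * (k : ℝ≥0∞) ^ (n - 1) * μJ * (8 / k : ℝ≥0∞) ^ n := by gcongr
    _ = 32 ^ n * μJ / (k * t) :=
        ENNReal.four_pow_mul_inv_mul_pow_pred_mul_eight_div_pow (by omega)
          (by exact_mod_cast hk.ne') (ENNReal.natCast_ne_top k)

/-- For `n ≥ 1`, `k ≥ 1`, `θ > 0` and a Borel set `J ⊆ ℝⁿ` with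
`ℋ^{n-1}(J) < ∞`, the set `B` of lattice points `z ∈ (2/k)ℤⁿ` with
`ℋ^{n-1}(J ∩ (z + (-4/k,4/k)ⁿ)) > θ k^{-(n-1)}` is finite, has at most
`4ⁿ θ⁻¹ k^{n-1} ℋ^{n-1}(J)` elements, and the Lebesgue measure of the union of the
corresponding cubes is at most `32ⁿ ℋ^{n-1}(J)/(kθ)`. -/
theorem stmt_6 (n : ℕ) (hn : 1 ≤ n) (k : ℕ) (hk : 0 < k) (θ : ℝ) (hθ : 0 < θ)
    (J : Set (EuclideanSpace ℝ (Fin n))) (hJ : MeasurableSet J)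
    (hJfin : μH[(n : ℝ) - 1] J < ⊤)
    (B : Set (EuclideanSpace ℝ (Fin n)))
    (hB : B = {z ∈ latticePts n k |
      ENNReal.ofReal θ / (k : ℝ≥0∞) ^ (n - 1) < μH[(n : ℝ) - 1] (J ∩ bigCube n k z)}) :
    B.Finite ∧
      (Nat.card B : ℝ≥0∞)
        ≤ 4 ^ n * (ENNReal.ofReal θ)⁻¹ * (k : ℝ≥0∞) ^ (n - 1) * μH[(n : ℝ) - 1] J ∧
      volume (⋃ z ∈ B, bigCube n k z)
        ≤ 32 ^ n * μH[(n : ℝ) - 1] J / ((k : ℝ≥0∞) * ENNReal.ofReal θ) :=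
  stmt_6_general n hn k hk θ hθ J hJfin B hB
end

section
/- Let n ≥ 1, let μ ∈ (0,1), and let A_μ : ℝⁿ → ℝⁿ be the linear map A_μ(y₁,…,y_{n−1}, y_n) = (y₁,…,y_{n−1}, −μ·y_n). Let S ⊆ {y ∈ ℝⁿ : y_n < 0} be Lebesgue measurable, let v : ℝⁿ → ℝᵐ be Lebesgue measurable, let c ∈ ℝᵐ, and let x₀ ∈ ℝⁿ with (x₀)_n = 0. Assume that for every ε > 0, ℒⁿ(S ∩ B_ϱ(x₀) ∩ {y : |v(y) − c| > ε})/ϱⁿ → 0 as ϱ → 0⁺. Then for every ε > 0, ℒⁿ(A_μ^{−1}(S) ∩ B_ϱ(x₀) ∩ {y : y_n > 0} ∩ {y : |v(A_μ y) − c| > ε})/ϱⁿ → 0 as ϱ → 0⁺. In other words, the reflected function v ∘ A_μ has the same one-sided approximate limit c at x₀ from the upper half-space as v has from the lower half-space. -/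
open MeasureTheory Filter Topology Metric

/-!
The map `A_μ` is linear with determinant `-μ`, so it multiplies Lebesgue measure of preimages by
`μ⁻¹`. Since `|μ| ≤ 1` and `x₀` lies on the hyperplane `{y_n = 0}` fixed by `A_μ`, it maps
`B_ϱ(x₀)` into itself. Hence the set measured in the conclusion lies in the `A_μ`-preimage of the
set measured in the hypothesis, and the two density ratios differ by at most the factor `μ⁻¹`.
-/

section ScaleCoord

variable {ι : Type*} [Fintype ι] [DecidableEq ι]

def scaleCoord (k : ι) (a : ℝ) : EuclideanSpace ℝ ι →ₗ[ℝ] EuclideanSpace ℝ ι :=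
  Matrix.toLpLin 2 2 (Matrix.diagonal (Function.update 1 k a))

theorem scaleCoord_apply (k : ι) (a : ℝ) (y : EuclideanSpace ℝ ι) (i : ι) :
    scaleCoord k a y i = if i = k then a * y i else y i := by
  by_cases h : i = k <;> simp [scaleCoord, Matrix.toLpLin_apply, Matrix.mulVec_diagonal, h]

theorem det_scaleCoord (k : ι) (a : ℝ) : LinearMap.det (scaleCoord k a) = a := by
  rw [scaleCoord, Matrix.toLpLin_eq_toLin, LinearMap.det_toLin, Matrix.det_diagonal,
    Finset.prod_update_of_mem (Finset.mem_univ k)]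
  simp

theorem norm_scaleCoord_le (k : ι) {a : ℝ} (ha : |a| ≤ 1) (y : EuclideanSpace ℝ ι) :
    ‖scaleCoord k a y‖ ≤ ‖y‖ := by
  rw [EuclideanSpace.norm_eq, EuclideanSpace.norm_eq]
  gcongr with i
  rw [scaleCoord_apply]
  split_ifs
  · rw [norm_mul, Real.norm_eq_abs a]
    exact mul_le_of_le_one_left (norm_nonneg _) ha
  · rfl

theorem scaleCoord_eq_self {k : ι} {x : EuclideanSpace ℝ ι} (hx : x k = 0) (a : ℝ) :
    scaleCoord k a x = x := by
  ext i
  rw [scaleCoord_apply]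
  split_ifs with h
  · rw [h, hx, mul_zero]
  · rfl

theorem dist_scaleCoord_le {k : ι} {x : EuclideanSpace ℝ ι} (hx : x k = 0) {a : ℝ} (ha : |a| ≤ 1)
    (y : EuclideanSpace ℝ ι) : dist (scaleCoord k a y) x ≤ dist y x := by
  conv_lhs => rw [← scaleCoord_eq_self hx a]
  rw [dist_eq_norm, dist_eq_norm, ← map_sub]
  exact norm_scaleCoord_le k ha _

end ScaleCoord

theorem measureReal_le_of_subset_preimage {E : Type*} [NormedAddCommGroup E] [NormedSpace ℝ E]
    [MeasurableSpace E] [BorelSpace E] [FiniteDimensional ℝ E] (μ : Measure E)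
    [μ.IsAddHaarMeasure] {L : E →ₗ[ℝ] E} (hL : LinearMap.det L ≠ 0) {s t : Set E}
    (ht : μ t ≠ ⊤) (hst : s ⊆ L ⁻¹' t) : μ.real s ≤ |(LinearMap.det L)⁻¹| * μ.real t := by
  have hpre := Measure.addHaar_preimage_linearMap μ hL t
  calc μ.real s ≤ μ.real (L ⁻¹' t) :=
        measureReal_mono hst (by rw [hpre]; exact ENNReal.mul_ne_top ENNReal.ofReal_ne_top ht)
    _ = |(LinearMap.det L)⁻¹| * μ.real t := by
        rw [measureReal_def, hpre, ENNReal.toReal_mul, ENNReal.toReal_ofReal (abs_nonneg _)]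
        rfl

theorem stmt_9_general (n : ℕ) (μ : ℝ) (hμ : μ ∈ Set.Ioo (0 : ℝ) 1) (m : ℕ)
    (S : Set (EuclideanSpace ℝ (Fin (n + 1))))
    (v : EuclideanSpace ℝ (Fin (n + 1)) → EuclideanSpace ℝ (Fin m))
    (c : EuclideanSpace ℝ (Fin m))
    (x₀ : EuclideanSpace ℝ (Fin (n + 1))) (hx₀ : x₀ (Fin.last n) = 0)
    (Aμ : EuclideanSpace ℝ (Fin (n + 1)) → EuclideanSpace ℝ (Fin (n + 1)))
    (hAμ : ∀ y i, Aμ y i = if i = Fin.last n then -μ * y i else y i)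
    (hlim : ∀ ε : ℝ, 0 < ε → Tendsto
      (fun ϱ => (volume (S ∩ ball x₀ ϱ ∩ {y | ε < ‖v y - c‖})).toReal / ϱ ^ (n + 1))
      (𝓝[>] (0 : ℝ)) (𝓝 0)) :
    ∀ ε : ℝ, 0 < ε → Tendsto
      (fun ϱ => (volume ((Aμ ⁻¹' S) ∩ ball x₀ ϱ ∩ {y | 0 < y (Fin.last n)}
          ∩ {y | ε < ‖v (Aμ y) - c‖})).toReal / ϱ ^ (n + 1))
      (𝓝[>] (0 : ℝ)) (𝓝 0) := by
  intro ε hε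
  obtain ⟨hμ0, hμ1⟩ := hμ
  obtain rfl : Aμ = scaleCoord (Fin.last n) (-μ) :=
    funext fun y => by ext i; rw [hAμ, scaleCoord_apply]
  have hdet : LinearMap.det (scaleCoord (Fin.last n) (-μ)) = -μ := det_scaleCoord _ _
  have hcontr : |-μ| ≤ 1 := by rw [abs_neg, abs_of_pos hμ0]; exact hμ1.le
  have hbound : ∀ ϱ > 0,
      (volume ((scaleCoord (Fin.last n) (-μ) ⁻¹' S) ∩ ball x₀ ϱ ∩ {y | 0 < y (Fin.last n)}
          ∩ {y | ε < ‖v (scaleCoord (Fin.last n) (-μ) y) - c‖})).toReal / ϱ ^ (n + 1)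
        ≤ μ⁻¹ * ((volume (S ∩ ball x₀ ϱ ∩ {y | ε < ‖v y - c‖})).toReal / ϱ ^ (n + 1)) := by
    intro ϱ hϱ
    rw [← mul_div_assoc]
    gcongr
    have hfin : volume (S ∩ ball x₀ ϱ ∩ {y | ε < ‖v y - c‖}) ≠ ⊤ :=
      measure_ne_top_of_subset (fun y hy => hy.1.2) measure_ball_lt_top.ne
    have hdet0 : LinearMap.det (scaleCoord (Fin.last n) (-μ)) ≠ 0 := by
      rw [hdet]; exact neg_ne_zero.2 hμ0.ne'
    refine (measureReal_le_of_subset_preimage volume hdet0 hfin ?_).trans_eq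
      (by rw [hdet, abs_inv, abs_neg, abs_of_pos hμ0, measureReal_def])
    rintro y ⟨⟨⟨hyS, hyB⟩, -⟩, hyv⟩
    exact ⟨⟨hyS, (dist_scaleCoord_le hx₀ hcontr y).trans_lt hyB⟩, hyv⟩
  have hlimμ := (hlim ε hε).const_mul μ⁻¹
  rw [mul_zero] at hlimμ
  exact squeeze_zero' (eventually_nhdsWithin_of_forall fun ϱ (hϱ : 0 < ϱ) => by positivity)
    (eventually_nhdsWithin_of_forall hbound) hlimμ

/-- For the map `A_μ(y₁,…,yₙ,y_{n+1}) = (y₁,…,yₙ,-μ y_{n+1})` with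
`μ ∈ (0,1)`, if `v` has one-sided approximate limit `c` at `x₀` (on the hyperplane
`{y_{last} = 0}`) from the lower half-space relative to `S ⊆ {y_{last} < 0}`, then the
reflected function `v ∘ A_μ` has the same one-sided approximate limit `c` at `x₀` from
the upper half-space relative to `A_μ⁻¹(S)`. -/
theorem stmt_9 (n : ℕ) (μ : ℝ) (hμ : μ ∈ Set.Ioo (0 : ℝ) 1) (m : ℕ)
    (S : Set (EuclideanSpace ℝ (Fin (n + 1)))) (hSm : MeasurableSet S)
    (hS : S ⊆ {y | y (Fin.last n) < 0})
    (v : EuclideanSpace ℝ (Fin (n + 1)) → EuclideanSpace ℝ (Fin m)) (hv : Measurable v)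
    (c : EuclideanSpace ℝ (Fin m))
    (x₀ : EuclideanSpace ℝ (Fin (n + 1))) (hx₀ : x₀ (Fin.last n) = 0)
    (Aμ : EuclideanSpace ℝ (Fin (n + 1)) → EuclideanSpace ℝ (Fin (n + 1)))
    (hAμ : ∀ y i, Aμ y i = if i = Fin.last n then -μ * y i else y i)
    (hlim : ∀ ε : ℝ, 0 < ε → Tendsto
      (fun ϱ => (volume (S ∩ ball x₀ ϱ ∩ {y | ε < ‖v y - c‖})).toReal / ϱ ^ (n + 1))
      (𝓝[>] (0 : ℝ)) (𝓝 0)) :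
    ∀ ε : ℝ, 0 < ε → Tendsto
      (fun ϱ => (volume ((Aμ ⁻¹' S) ∩ ball x₀ ϱ ∩ {y | 0 < y (Fin.last n)}
          ∩ {y | ε < ‖v (Aμ y) - c‖})).toReal / ϱ ^ (n + 1))
      (𝓝[>] (0 : ℝ)) (𝓝 0) :=
  stmt_9_general n μ hμ m S v c x₀ hx₀ Aμ hAμ hlim
end
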